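/- Let B be the ball algebra on the closed unit ball of ℂ^d. Every closed homogeneous ideal J ⊆ B is finitely generated as a closed ideal: there exists a finite set F ⊆ J such that J equals the closure in B of the (algebraic) ideal of B generated by F. -/

import Mathlib

open MvPolynomial Metric

noncomputable section

abbrev Cd (d : ℕ) := EuclideanSpace ℂ (Fin d)

abbrev CBall (d : ℕ) : Set (Cd d) := Metric.closedBall (0 : Cd d) 1

instance (d : ℕ) : CompactSpace (CBall d) :=
  isCompact_iff_compactSpace.mp (isCompact_closedBall _ _)

/-- The `i`-th coordinate function on the closed unit ball. -/
def coordFn (d : ℕ) (i : Fin d) : C(CBall d, ℂ) :=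
  ⟨fun z => (z : Cd d) i, by first | fun_prop | exact (continuous_apply i).comp ((PiLp.continuous_ofLp 2 _).comp continuous_subtype_val) | continuity⟩

/-- Restriction of a polynomial to the closed unit ball, as an element of
`C(closedBall, ℂ)`. -/
def polyMap (d : ℕ) : MvPolynomial (Fin d) ℂ →ₐ[ℂ] C(CBall d, ℂ) :=
  aeval (coordFn d)

/-- The ball algebra: the closure, in the Banach algebra of continuous functions on
the closed unit ball of ℂ^d with the supremum norm, of the restrictions of
polynomials. -/
def ballAlg (d : ℕ) : Set C(CBall d, ℂ) := closure (Set.range (polyMap d))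

/-- `J` is an ideal of the ball algebra `B`. -/
def IsIdealOfBallAlg (d : ℕ) (J : Set C(CBall d, ℂ)) : Prop :=
  J ⊆ ballAlg d ∧ (0 : C(CBall d, ℂ)) ∈ J ∧
    (∀ f ∈ J, ∀ g ∈ J, f + g ∈ J) ∧ (∀ f ∈ J, ∀ g ∈ ballAlg d, g * f ∈ J)

/-- The self-map of the closed ball given by `z ↦ t z` for `‖t‖ ≤ 1`. -/
def dilatePt (d : ℕ) (t : ℂ) (ht : ‖t‖ ≤ 1) : C(CBall d, CBall d) :=
  ⟨fun z => ⟨t • (z : Cd d), by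
      have hz : ‖(z : Cd d)‖ ≤ 1 := mem_closedBall_zero_iff.mp z.2
      show t • (z : Cd d) ∈ Metric.closedBall 0 1
      rw [mem_closedBall_zero_iff, norm_smul]
      exact mul_le_one₀ ht (norm_nonneg _) hz⟩,
    by exact Continuous.subtype_mk (continuous_subtype_val.const_smul t) _⟩

/-- The dilation `f ↦ (z ↦ f (t z))` on continuous functions on the closed ball. -/
def dilateFn (d : ℕ) (t : ℂ) (ht : ‖t‖ ≤ 1) (f : C(CBall d, ℂ)) : C(CBall d, ℂ) :=
  f.comp (dilatePt d t ht)

/-- A closed ideal of the ball algebra is homogeneous if it is invariant under all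
dilations `z ↦ t z`, `|t| < 1`. -/
def IsHomogBallIdeal (d : ℕ) (J : Set C(CBall d, ℂ)) : Prop :=
  ∀ f ∈ J, ∀ t : ℂ, ∀ ht : ‖t‖ < 1, dilateFn d t ht.le f ∈ J

/-!
Let `I` be the ideal of polynomials whose restriction to the ball lies in `J`; by Hilbert's
basis theorem it is generated by finitely many polynomials, and their restrictions form `F`.
For `f ∈ B`, the averages `f_k = (2π)⁻¹ ∫ e^{-ikθ} f(e^{iθ} ·) dθ` extend the homogeneous
components of polynomials; being `1`-Lipschitz in `f`, they take `B` into the closure of the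
polynomials of degree `≤ k`, which is that finite-dimensional space itself. If `f ∈ J`, each
`f_k` lies in `J` because `J` is closed, convex and rotation invariant, so `f_k` is a polynomial
in `I`. Approximating `f` by a polynomial `p` shows that `f(t ·) - ∑_{k ≤ deg p} t^k f_k` is
at most `(1 + (1 - |t|)⁻¹) ‖f - p‖` for `|t| < 1`, so `f(t ·)`, and in the limit `t → 1`
also `f`, lies in the closed ideal generated by `F`.
-/

namespace BallAlgebra

variable {d : ℕ}

section Ideals

def ballSubalgebra (d : ℕ) : Subalgebra ℂ C(CBall d, ℂ) :=
  (polyMap d).range.topologicalClosure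

lemma polyMap_mem_ballAlg (p : MvPolynomial (Fin d) ℂ) : polyMap d p ∈ ballAlg d :=
  subset_closure ⟨p, rfl⟩

variable {J : Set C(CBall d, ℂ)}

def _root_.IsIdealOfBallAlg.toSubmodule (hJ : IsIdealOfBallAlg d J) :
    Submodule ℂ C(CBall d, ℂ) where
  carrier := J
  add_mem' {f g} hf hg := hJ.2.2.1 f hf g hg
  zero_mem' := hJ.2.1
  smul_mem' c f hf := by
    simpa [Algebra.smul_def] using hJ.2.2.2 f hf _ ((ballSubalgebra d).algebraMap_mem c)

def _root_.IsIdealOfBallAlg.comapPoly (hJ : IsIdealOfBallAlg d J) :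
    Ideal (MvPolynomial (Fin d) ℂ) where
  carrier := {p | polyMap d p ∈ J}
  add_mem' {p q} hp hq := by simpa using hJ.2.2.1 _ hp _ hq
  zero_mem' := by simpa using hJ.2.1
  smul_mem' p q hq := by simpa using hJ.2.2.2 _ hq _ (polyMap_mem_ballAlg p)

def idealSpan (F : Set C(CBall d, ℂ)) : Set C(CBall d, ℂ) :=
  {h | ∃ (n : ℕ) (g q : Fin n → C(CBall d, ℂ)),
    (∀ i, g i ∈ ballAlg d) ∧ (∀ i, q i ∈ F) ∧ h = ∑ i, g i * q i}

lemma subset_idealSpan (F : Set C(CBall d, ℂ)) : F ⊆ idealSpan F := fun f hf =>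
  ⟨1, fun _ => 1, fun _ => f, fun _ => (ballSubalgebra d).one_mem, fun _ => hf, by simp⟩

lemma idealSpan_subset {F : Set C(CBall d, ℂ)} (hJ : IsIdealOfBallAlg d J) (hF : F ⊆ J) :
    idealSpan F ⊆ J := by
  rintro _ ⟨n, g, q, hg, hq, rfl⟩
  exact hJ.toSubmodule.sum_mem fun i _ => hJ.2.2.2 _ (hF (hq i)) _ (hg i)

lemma isIdealOfBallAlg_idealSpan {F : Set C(CBall d, ℂ)} (hF : F ⊆ ballAlg d) :
    IsIdealOfBallAlg d (idealSpan F) := by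
  refine ⟨?_, ⟨0, Fin.elim0, Fin.elim0, fun i => i.elim0, fun i => i.elim0, by simp⟩, ?_, ?_⟩
  · rintro _ ⟨n, g, q, hg, hq, rfl⟩
    exact (ballSubalgebra d).sum_mem fun i _ =>
      (ballSubalgebra d).mul_mem (hg i) (hF (hq i))
  · rintro _ ⟨m, g, q, hg, hq, rfl⟩ _ ⟨n, g', q', hg', hq', rfl⟩
    refine ⟨m + n, Fin.append g g', Fin.append q q', Fin.addCases ?_ ?_, Fin.addCases ?_ ?_,
      by simp [Fin.sum_univ_add]⟩ <;> simpa
  · rintro _ ⟨n, g, q, hg, hq, rfl⟩ h hh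
    refine ⟨n, fun i => h * g i, q, fun i => (ballSubalgebra d).mul_mem hh (hg i), hq, ?_⟩
    simp [Finset.mul_sum, mul_assoc]

end Ideals

section Dilation

lemma dilateFn_one (f : C(CBall d, ℂ)) : dilateFn d 1 norm_one.le f = f := by
  ext z; simp [dilateFn, dilatePt]

lemma dilateFn_sub (t : ℂ) (ht : ‖t‖ ≤ 1) (f g : C(CBall d, ℂ)) :
    dilateFn d t ht (f - g) = dilateFn d t ht f - dilateFn d t ht g := rfl

lemma norm_dilateFn_le (t : ℂ) (ht : ‖t‖ ≤ 1) (f : C(CBall d, ℂ)) :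
    ‖dilateFn d t ht f‖ ≤ ‖f‖ :=
  (ContinuousMap.norm_le _ (norm_nonneg f)).mpr fun _ => f.norm_coe_le_norm _

lemma continuous_dilateFn (f : C(CBall d, ℂ)) :
    Continuous fun t : {t : ℂ // ‖t‖ ≤ 1} => dilateFn d t t.2 f :=
  ContinuousMap.continuous_of_continuous_uncurry _ <| f.continuous.comp <|
    ((continuous_subtype_val.comp continuous_fst).smul
      (continuous_subtype_val.comp continuous_snd)).subtype_mk _

lemma dilateFn_mem_of_isClosed {A : Set C(CBall d, ℂ)} (hA : IsClosed A) {f : C(CBall d, ℂ)}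
    (hf : ∀ s : ℂ, ∀ hs : ‖s‖ < 1, dilateFn d s hs.le f ∈ A) (t : ℂ) (ht : ‖t‖ ≤ 1) :
    dilateFn d t ht f ∈ A := by
  let U : Set {s : ℂ // ‖s‖ ≤ 1} := {s | ‖(s : ℂ)‖ < 1}
  have hU : Subtype.val '' U = ball 0 1 := by
    ext s
    simpa [U] using fun hs : ‖s‖ < 1 => hs.le
  have hdense : ⟨t, ht⟩ ∈ closure U := by
    rw [closure_subtype, hU, closure_ball _ one_ne_zero]
    simpa using ht
  exact closure_minimal (s := U) (fun s hs => hf s hs) (hA.preimage (continuous_dilateFn f)) hdense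

lemma polyMap_apply (p : MvPolynomial (Fin d) ℂ) (z : CBall d) :
    polyMap d p z = eval (fun i => (z : Cd d) i) p := by
  rw [← coe_aeval_eq_eval, polyMap, ← ContinuousMap.evalAlgHom_apply ℂ ℂ z, comp_aeval_apply]
  rfl

lemma _root_.MvPolynomial.IsHomogeneous.eval_smul {R σ : Type*} [CommSemiring R]
    {q : MvPolynomial σ R} {n : ℕ} (hq : q.IsHomogeneous n) (t : R) (x : σ → R) :
    eval (t • x) q = t ^ n * eval x q := by
  rw [eval_eq, eval_eq, Finset.mul_sum]
  refine Finset.sum_congr rfl fun s hs => ?_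
  have hdeg : s.degree = n := by
    by_contra h
    exact mem_support_iff.mp hs (hq.coeff_eq_zero h)
  simp only [Pi.smul_apply, smul_eq_mul, mul_pow, Finset.prod_mul_distrib,
    Finset.prod_pow_eq_pow_sum, ← Finsupp.degree_apply, hdeg]
  ring

lemma dilateFn_polyMap (t : ℂ) (ht : ‖t‖ ≤ 1) (p : MvPolynomial (Fin d) ℂ) :
    dilateFn d t ht (polyMap d p) =
      ∑ m ∈ Finset.range (p.totalDegree + 1), t ^ m • polyMap d (homogeneousComponent m p) := by
  ext z
  conv_lhs => rw [← p.sum_homogeneousComponent]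
  have hz : (fun i => ((dilatePt d t ht z : CBall d) : Cd d) i) = t • fun i => (z : Cd d) i := rfl
  simp only [dilateFn, ContinuousMap.comp_apply, polyMap_apply, hz, map_sum,
    ContinuousMap.sum_apply, ContinuousMap.smul_apply, smul_eq_mul,
    (homogeneousComponent_isHomogeneous _ p).eval_smul]

end Dilation

section Fourier

open Real

lemma integral_exp_int_mul_I (n : ℤ) :
    ∫ θ in (0 : ℝ)..2 * π, Complex.exp (n * θ * Complex.I) = if n = 0 then (2 * π : ℂ) else 0 := by
  split_ifs with hn
  · simp [hn]
  have hc : (n : ℂ) * Complex.I ≠ 0 := by simpa using hn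
  have hperiod : Complex.exp (n * Complex.I * (2 * π : ℝ)) = 1 := by
    rw [← Complex.exp_int_mul_two_pi_mul_I n]
    push_cast
    ring_nf
  simp_rw [mul_right_comm _ _ Complex.I]
  rw [integral_exp_mul_complex hc, hperiod]
  simp

def fourierIntegrand (k : ℕ) (f : C(CBall d, ℂ)) (θ : ℝ) : C(CBall d, ℂ) :=
  Complex.exp (-(k * θ * Complex.I)) •
    dilateFn d (Complex.exp (θ * Complex.I)) (Complex.norm_exp_ofReal_mul_I θ).le f

def fourierCoeff (k : ℕ) (f : C(CBall d, ℂ)) : C(CBall d, ℂ) :=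
  (2 * π)⁻¹ • ∫ θ in (0 : ℝ)..2 * π, fourierIntegrand k f θ

variable (k : ℕ)

lemma continuous_fourierIntegrand (f : C(CBall d, ℂ)) : Continuous (fourierIntegrand k f) :=
  (by fun_prop : Continuous fun θ : ℝ => Complex.exp (-(k * θ * Complex.I))).smul <|
    (continuous_dilateFn f).comp <|
      (by fun_prop : Continuous fun θ : ℝ => Complex.exp (θ * Complex.I)).subtype_mk
        fun θ => (Complex.norm_exp_ofReal_mul_I θ).le

lemma norm_fourierIntegrand_le (f : C(CBall d, ℂ)) (θ : ℝ) : ‖fourierIntegrand k f θ‖ ≤ ‖f‖ := by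
  rw [fourierIntegrand, norm_smul, show -(k * θ * Complex.I) = (-(k * θ) : ℝ) * Complex.I by
    push_cast; ring, Complex.norm_exp_ofReal_mul_I, one_mul]
  exact norm_dilateFn_le _ _ f

lemma fourierCoeff_sub (f g : C(CBall d, ℂ)) :
    fourierCoeff k (f - g) = fourierCoeff k f - fourierCoeff k g := by
  simp only [fourierCoeff, fourierIntegrand, dilateFn_sub, smul_sub]
  rw [intervalIntegral.integral_sub, smul_sub] <;>
    exact (continuous_fourierIntegrand k _).intervalIntegrable _ _

lemma norm_fourierCoeff_le (f : C(CBall d, ℂ)) : ‖fourierCoeff k f‖ ≤ ‖f‖ := by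
  have hπ : 0 < 2 * π := by positivity
  have hint := intervalIntegral.norm_integral_le_of_norm_le_const
    (a := 0) (b := 2 * π) fun θ _ => norm_fourierIntegrand_le k f θ
  rw [fourierCoeff, norm_smul, norm_inv, Real.norm_of_nonneg hπ.le]
  rw [sub_zero, abs_of_pos hπ] at hint
  calc (2 * π)⁻¹ * ‖∫ θ in (0 : ℝ)..2 * π, fourierIntegrand k f θ‖
      ≤ (2 * π)⁻¹ * (‖f‖ * (2 * π)) := by gcongr
    _ = ‖f‖ := by field_simp

lemma fourierCoeff_mem {J : Set C(CBall d, ℂ)} (hJ : IsIdealOfBallAlg d J) (hJcl : IsClosed J)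
    (hJhom : IsHomogBallIdeal d J) {f : C(CBall d, ℂ)} (hf : f ∈ J) : fourierCoeff k f ∈ J := by
  have haverage : fourierCoeff k f = ⨍ θ in (0 : ℝ)..2 * π, fourierIntegrand k f θ := by
    rw [interval_average_eq, sub_zero, fourierCoeff]
  rw [haverage]
  refine (hJ.toSubmodule.restrictScalars ℝ).convex.set_average_mem hJcl
    (by simp) (by simp [ENNReal.mul_eq_top]) (Filter.Eventually.of_forall fun θ => ?_)
    ((continuous_fourierIntegrand k f).integrableOn_uIoc)
  exact hJ.toSubmodule.smul_mem _ (dilateFn_mem_of_isClosed hJcl (hJhom f hf) _ _)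

lemma fourierCoeff_polyMap (p : MvPolynomial (Fin d) ℂ) :
    fourierCoeff k (polyMap d p) = polyMap d (homogeneousComponent k p) := by
  have hintegrand : ∀ θ : ℝ, fourierIntegrand k (polyMap d p) θ =
      ∑ m ∈ Finset.range (p.totalDegree + 1),
        Complex.exp (((m - k : ℤ) : ℂ) * θ * Complex.I) • polyMap d (homogeneousComponent m p) := by
    intro θ
    rw [fourierIntegrand, dilateFn_polyMap, Finset.smul_sum]
    refine Finset.sum_congr rfl fun m _ => ?_
    rw [smul_smul, ← Complex.exp_nat_mul, ← Complex.exp_add]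
    push_cast
    ring_nf
  simp only [fourierCoeff, hintegrand]
  rw [intervalIntegral.integral_finsetSum fun m _ =>
    Continuous.intervalIntegrable (by fun_prop) _ _]
  simp only [intervalIntegral.integral_smul_const, integral_exp_int_mul_I, sub_eq_zero,
    Nat.cast_inj, ite_smul, zero_smul, Finset.sum_ite_eq', Finset.mem_range]
  split_ifs with hk
  · rw [← Complex.coe_smul, smul_smul]
    push_cast
    rw [inv_mul_cancel₀ (by simp [pi_ne_zero]), one_smul]
  · rw [smul_zero, homogeneousComponent_eq_zero _ _ (by omega), map_zero]

end Fourier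

section Approximation

variable {f : C(CBall d, ℂ)}

lemma lipschitzWith_fourierCoeff (k : ℕ) : LipschitzWith 1 (fourierCoeff (d := d) k) :=
  LipschitzWith.of_dist_le_mul fun f g => by
    simpa [dist_eq_norm, ← fourierCoeff_sub] using norm_fourierCoeff_le k (f - g)

lemma fourierCoeff_mem_range_polyMap (hf : f ∈ ballAlg d) (k : ℕ) :
    fourierCoeff k f ∈ Set.range (polyMap d) := by
  let W := (restrictTotalDegree (Fin d) ℂ k).map (polyMap d).toLinearMap
  have hmaps : Set.MapsTo (fourierCoeff k) (Set.range (polyMap d)) W := by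
    rintro _ ⟨p, rfl⟩
    rw [fourierCoeff_polyMap]
    exact ⟨_, (mem_restrictTotalDegree _ _ _).mpr
      (homogeneousComponent_isHomogeneous k p).totalDegree_le, rfl⟩
  have hmem := map_mem_closure (lipschitzWith_fourierCoeff k).continuous hf hmaps
  obtain ⟨q, -, hq⟩ := W.closed_of_finiteDimensional.closure_eq ▸ hmem
  exact ⟨q, hq⟩

lemma norm_dilateFn_sub_sum_fourierCoeff_le (p : MvPolynomial (Fin d) ℂ) (t : ℂ) (ht : ‖t‖ < 1) :
    ‖dilateFn d t ht.le f - ∑ m ∈ Finset.range (p.totalDegree + 1), t ^ m • fourierCoeff m f‖ ≤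
      (1 + (1 - ‖t‖)⁻¹) * ‖f - polyMap d p‖ := by
  set g := f - polyMap d p
  have hpoly : dilateFn d t ht.le (polyMap d p) =
      ∑ m ∈ Finset.range (p.totalDegree + 1), t ^ m • fourierCoeff m (polyMap d p) := by
    simp only [dilateFn_polyMap, fourierCoeff_polyMap]
  have hreduce :
      dilateFn d t ht.le f - ∑ m ∈ Finset.range (p.totalDegree + 1), t ^ m • fourierCoeff m f =
      dilateFn d t ht.le g - ∑ m ∈ Finset.range (p.totalDegree + 1), t ^ m • fourierCoeff m g := by
    simp only [g, dilateFn_sub, fourierCoeff_sub, smul_sub, Finset.sum_sub_distrib, hpoly]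
    abel
  have hgeom : ∑ m ∈ Finset.range (p.totalDegree + 1), ‖t‖ ^ m ≤ (1 - ‖t‖)⁻¹ := by
    have := geom_sum_Ico_le_of_lt_one (m := 0) (n := p.totalDegree + 1) (norm_nonneg t) ht
    rwa [← Finset.range_eq_Ico, pow_zero, one_div] at this
  rw [hreduce]
  calc _ ≤ ‖dilateFn d t ht.le g‖ + ∑ m ∈ Finset.range (p.totalDegree + 1), ‖t‖ ^ m * ‖g‖ := by
        refine (norm_sub_le _ _).trans ?_
        gcongr
        refine (norm_sum_le _ _).trans (Finset.sum_le_sum fun m _ => ?_)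
        rw [norm_smul, norm_pow]
        exact mul_le_mul_of_nonneg_left (norm_fourierCoeff_le m g) (by positivity)
    _ ≤ ‖g‖ + (1 - ‖t‖)⁻¹ * ‖g‖ := by
        rw [← Finset.sum_mul]
        gcongr
        exact norm_dilateFn_le _ _ g
    _ = (1 + (1 - ‖t‖)⁻¹) * ‖g‖ := by ring

lemma dilateFn_mem_closure_span_fourierCoeff (hf : f ∈ ballAlg d) (t : ℂ) (ht : ‖t‖ < 1) :
    dilateFn d t ht.le f ∈
      closure (Submodule.span ℂ (Set.range fun k => fourierCoeff k f) : Set C(CBall d, ℂ)) := by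
  rw [Metric.mem_closure_iff]
  intro ε hε
  have hC : 0 < 1 + (1 - ‖t‖)⁻¹ := by
    have := sub_pos.mpr ht
    positivity
  obtain ⟨_, ⟨p, rfl⟩, hp⟩ := Metric.mem_closure_iff.mp hf (ε / (1 + (1 - ‖t‖)⁻¹)) (by positivity)
  refine ⟨∑ m ∈ Finset.range (p.totalDegree + 1), t ^ m • fourierCoeff m f,
    Submodule.sum_mem _ fun m _ => Submodule.smul_mem _ _ (Submodule.subset_span ⟨m, rfl⟩), ?_⟩
  rw [dist_eq_norm] at hp ⊢
  rw [lt_div_iff₀' hC] at hp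
  exact (norm_dilateFn_sub_sum_fourierCoeff_le p t ht).trans_lt hp

lemma mem_closure_span_fourierCoeff (hf : f ∈ ballAlg d) :
    f ∈ closure (Submodule.span ℂ (Set.range fun k => fourierCoeff k f) : Set C(CBall d, ℂ)) := by
  simpa [dilateFn_one] using dilateFn_mem_of_isClosed isClosed_closure
    (dilateFn_mem_closure_span_fourierCoeff hf) 1 norm_one.le

end Approximation

end BallAlgebra

open BallAlgebra in
/-- Every closed homogeneous ideal `J` of the ball algebra `B` is
finitely generated as a closed ideal: there is a finite set `F ⊆ J` such that `J`
is the closure of the (algebraic) ideal of `B` generated by `F`, i.e. of the set of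
finite sums `Σ gᵢ·fᵢ` with `gᵢ ∈ B` and `fᵢ ∈ F`. -/
theorem stmt16 (d : ℕ) (J : Set C(CBall d, ℂ))
    (hJ : IsIdealOfBallAlg d J) (hJcl : IsClosed J) (hJhom : IsHomogBallIdeal d J) :
    ∃ F : Finset C(CBall d, ℂ), (F : Set C(CBall d, ℂ)) ⊆ J ∧
      J = closure {h : C(CBall d, ℂ) |
        ∃ (n : ℕ) (g q : Fin n → C(CBall d, ℂ)),
          (∀ i, g i ∈ ballAlg d) ∧ (∀ i, q i ∈ (F : Set C(CBall d, ℂ))) ∧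
          h = ∑ i, g i * q i} := by
  classical
  obtain ⟨s, hs⟩ := IsNoetherian.noetherian hJ.comapPoly
  have hFJ : (s.image (polyMap d) : Set C(CBall d, ℂ)) ⊆ J := by
    rw [Finset.coe_image, Set.image_subset_iff]
    exact fun p hp => (hs ▸ Ideal.subset_span hp : p ∈ hJ.comapPoly)
  have hK := isIdealOfBallAlg_idealSpan (hFJ.trans hJ.1)
  have hcomap : hJ.comapPoly ≤ hK.comapPoly := by
    rw [← hs, Ideal.span_le]
    exact fun p hp => subset_idealSpan _ (Finset.mem_image_of_mem _ hp)
  refine ⟨s.image (polyMap d), hFJ,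
    subset_antisymm (fun f hf => ?_) (closure_minimal (idealSpan_subset hJ hFJ) hJcl)⟩
  refine closure_mono ((Submodule.span_le (p := hK.toSubmodule)).mpr ?_)
    (mem_closure_span_fourierCoeff (hJ.1 hf))
  rintro _ ⟨k, rfl⟩
  obtain ⟨q, hq⟩ := fourierCoeff_mem_range_polyMap (hJ.1 hf) k
  have hqJ : q ∈ hJ.comapPoly := show polyMap d q ∈ J from hq ▸ fourierCoeff_mem k hJ hJcl hJhom hf
  show fourierCoeff k f ∈ hK.toSubmodule
  rw [← hq]
  exact hcomap hqJ
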